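/- arXiv:2605.08464 — 5 statements merged into one kernel-verified Lean document; each statement's English description precedes it below -/
import Mathlib

section
/- Let ℓ : ℝ^C → ℝ be convex, non-negative and differentiable, let x ∈ ℝ^d be nonzero, and let α > 0. Then the infimum of ℓ(J x) over all matrices J ∈ ℝ^{C×d} with ‖J‖_F² ≤ α is attained at a matrix of the form J* = c xᵀ for some c ∈ ℝ^C with ‖c‖₂ ‖x‖₂ ≤ √α; i.e., there is a normal-aligned (rank at most one, with rows proportional to x) minimizer of the norm-constrained objective. -/
/-!
The map `J ↦ J x` sends the Frobenius ball `‖J‖_F² ≤ α` onto the Euclidean ball of radius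
`√α ‖x‖₂`: into it by Cauchy–Schwarz applied to each row, and onto it already through rank-one
matrices, since `(c xᵀ) x = ‖x‖₂² c` and `‖c xᵀ‖_F = ‖c‖₂ ‖x‖₂`. A continuous `ℓ` attains its
minimum `z` on that compact ball, and `c = z / ‖x‖₂²` gives the normal-aligned minimizer.
-/

noncomputable def norm2 {d : ℕ} (v : Fin d → ℝ) : ℝ := Real.sqrt (∑ j, (v j) ^ 2)

def frobSq {C d : ℕ} (J : Matrix (Fin C) (Fin d) ℝ) : ℝ := ∑ i, ∑ j, (J i j) ^ 2

open Matrix Finset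

section

variable {m n : Type*} [Fintype n]

theorem vecMulVec_mulVec_self (c : m → ℝ) (x : n → ℝ) :
    vecMulVec c x *ᵥ x = (∑ j, x j ^ 2) • c := by
  ext i
  simp [vecMulVec_mulVec, dotProduct, sq, mul_comm]

theorem sum_sq_pos_of_ne_zero {x : n → ℝ} (hx : x ≠ 0) : 0 < ∑ j, x j ^ 2 := by
  refine (Fintype.sum_nonneg fun j => sq_nonneg (x j)).lt_of_ne fun h => hx ?_
  have := (Fintype.sum_eq_zero_iff_of_nonneg fun j => sq_nonneg (x j)).1 h.symm
  exact funext fun j => pow_eq_zero_iff two_ne_zero |>.1 (congrFun this j)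

variable [Fintype m]

theorem isCompact_setOf_sum_sq_le (r : ℝ) : IsCompact {z : m → ℝ | ∑ i, z i ^ 2 ≤ r} := by
  refine Metric.isCompact_of_isClosed_isBounded (isClosed_le (by fun_prop) continuous_const) ?_
  refine (Metric.isBounded_closedBall (x := 0) (r := √r)).subset fun z hz => ?_
  rw [mem_closedBall_zero_iff, pi_norm_le_iff_of_nonneg (Real.sqrt_nonneg _)]
  exact fun i => Real.abs_le_sqrt <|
    (single_le_sum (fun j _ => sq_nonneg (z j)) (mem_univ i)).trans hz

theorem sum_sq_mulVec_le (J : Matrix m n ℝ) (x : n → ℝ) :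
    ∑ i, (J *ᵥ x) i ^ 2 ≤ (∑ i, ∑ j, J i j ^ 2) * ∑ j, x j ^ 2 := by
  rw [sum_mul]
  exact sum_le_sum fun i _ => sum_mul_sq_le_sq_mul_sq univ (J i) x

theorem sum_sq_vecMulVec (c : m → ℝ) (x : n → ℝ) :
    ∑ i, ∑ j, vecMulVec c x i j ^ 2 = (∑ i, c i ^ 2) * ∑ j, x j ^ 2 := by
  simp only [vecMulVec_apply, mul_pow, ← mul_sum, sum_mul]

end

theorem norm2_mul_norm2 {C d : ℕ} (c : Fin C → ℝ) (x : Fin d → ℝ) :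
    norm2 c * norm2 x = √(frobSq (vecMulVec c x)) := by
  rw [norm2, norm2, frobSq, sum_sq_vecMulVec, Real.sqrt_mul (sum_nonneg fun i _ => sq_nonneg _)]

theorem stmt1_general {C d : ℕ} (ℓ : (Fin C → ℝ) → ℝ)
    (hdiff : Differentiable ℝ ℓ)
    (x : Fin d → ℝ) (hx : x ≠ 0) (α : ℝ) (hα : 0 < α) :
    ∃ c : Fin C → ℝ,
      norm2 c * norm2 x ≤ Real.sqrt α ∧
      frobSq (Matrix.vecMulVec c x) ≤ α ∧
      ∀ J : Matrix (Fin C) (Fin d) ℝ, frobSq J ≤ α →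
        ℓ ((Matrix.vecMulVec c x).mulVec x) ≤ ℓ (J.mulVec x) := by
  set X := ∑ j, x j ^ 2
  have hX : 0 < X := sum_sq_pos_of_ne_zero hx
  obtain ⟨z, hzK, hzmin⟩ := (isCompact_setOf_sum_sq_le (α * X)).exists_isMinOn
    ⟨0, by simpa using mul_nonneg hα.le hX.le⟩ hdiff.continuous.continuousOn
  have hfrob : frobSq (vecMulVec (X⁻¹ • z) x) ≤ α := by
    have hz : ∑ i, z i ^ 2 ≤ α * X := hzK
    rw [frobSq, sum_sq_vecMulVec]
    simp only [Pi.smul_apply, smul_eq_mul, mul_pow, ← mul_sum]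
    rw [mul_assoc, inv_pow, inv_mul_le_iff₀ (by positivity), sq]
    exact mul_le_mul_of_nonneg_right hz hX.le |>.trans_eq (by ring)
  refine ⟨X⁻¹ • z, ?_, hfrob, fun J hJ => ?_⟩
  · exact (norm2_mul_norm2 _ x).trans_le (Real.sqrt_le_sqrt hfrob)
  · rw [vecMulVec_mulVec_self, smul_smul, mul_inv_cancel₀ hX.ne', one_smul]
    exact hzmin ((sum_sq_mulVec_le J x).trans (by gcongr; exact hJ))

/-- for a convex, non-negative, differentiable loss `ℓ`, nonzero `x`, and `α > 0`,
the infimum of `ℓ(J x)` over matrices `J` with `‖J‖_F² ≤ α` is attained at a normal-aligned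
matrix `J* = c xᵀ` with `‖c‖₂ ‖x‖₂ ≤ √α`. -/
theorem stmt1 {C d : ℕ} (ℓ : (Fin C → ℝ) → ℝ)
    (hconv : ConvexOn ℝ Set.univ ℓ) (hnonneg : ∀ z, 0 ≤ ℓ z)
    (hdiff : Differentiable ℝ ℓ)
    (x : Fin d → ℝ) (hx : x ≠ 0) (α : ℝ) (hα : 0 < α) :
    ∃ c : Fin C → ℝ,
      norm2 c * norm2 x ≤ Real.sqrt α ∧
      frobSq (Matrix.vecMulVec c x) ≤ α ∧
      ∀ J : Matrix (Fin C) (Fin d) ℝ, frobSq J ≤ α →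
        ℓ ((Matrix.vecMulVec c x).mulVec x) ≤ ℓ (J.mulVec x) :=
  stmt1_general ℓ hdiff x hx α hα
end

section
/- Let x ∈ ℝ^d be nonzero, λ ≥ 0, and let g(z) = J z + b be a linear classifier that is normal-aligned at x in the following sense: for every class c ≠ y there is a scalar w_c > 0 such that J^{(y)} − J^{(c)} = w_c · x/‖x‖₂ and b_y − b_c = λ w_c. Then for every perturbation ε ∈ ℝ^d with ‖ε‖₂ < ‖x‖₂ + λ and every c ≠ y, one has g_y(x + ε) > g_c(x + ε); i.e., the normal-aligned classifier correctly classifies all perturbations of x of Euclidean norm less than ‖x‖₂ + λ, achieving the maximal local robustness bound. -/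
/-- a normal-aligned linear classifier at a nonzero point `x`
(with `J^{(y)} − J^{(c)} = w_c x/‖x‖₂`, `w_c > 0`, and `b_y − b_c = λ w_c` for all `c ≠ y`)
correctly classifies every perturbation of `x` of Euclidean norm less than `‖x‖₂ + λ`. -/
theorem stmt5 {C d : ℕ} (x : Fin d → ℝ) (hx : x ≠ 0) (lam : ℝ) (hlam : 0 ≤ lam)
    (J : Matrix (Fin C) (Fin d) ℝ) (b : Fin C → ℝ) (y : Fin C)
    (w : Fin C → ℝ)
    (hw : ∀ c, c ≠ y → 0 < w c)
    (halign : ∀ c, c ≠ y → ∀ j, J y j - J c j = w c * x j / norm2 x)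
    (hoffset : ∀ c, c ≠ y → b y - b c = lam * w c) :
    ∀ ε : Fin d → ℝ, norm2 ε < norm2 x + lam →
      ∀ c, c ≠ y →
        (∑ j, J c j * (x j + ε j)) + b c < (∑ j, J y j * (x j + ε j)) + b y := by
  intro ε hε c hc
  have hwc := hw c hc
  have hx0 : 0 < norm2 x := by
    unfold norm2
    apply Real.sqrt_pos.mpr
    have hj : ∃ j, x j ≠ 0 := by
      by_contra h; push_neg at h; exact hx (funext h)
    obtain ⟨j, hj⟩ := hj
    exact Finset.sum_pos' (fun i _ => sq_nonneg _) ⟨j, Finset.mem_univ j, by positivity⟩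
  have hε0 : 0 ≤ norm2 ε := Real.sqrt_nonneg _
  have hCS : ∑ j, x j * (-ε j) ≤ norm2 x * norm2 ε := by
    have h := Finset.sum_mul_sq_le_sq_mul_sq Finset.univ x (fun j => -ε j)
    have h1 : (∑ j, x j * (-ε j)) ≤ Real.sqrt ((∑ j, x j ^ 2) * ∑ j, (ε j) ^ 2) := by
      have h2 : (∑ j, x j * (-ε j)) ≤ Real.sqrt ((∑ j, x j * (-ε j)) ^ 2) := by
        rw [Real.sqrt_sq_eq_abs]; exact le_abs_self _
      refine h2.trans (Real.sqrt_le_sqrt ?_)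
      simpa [neg_sq] using h
    calc (∑ j, x j * (-ε j)) ≤ Real.sqrt ((∑ j, x j ^ 2) * ∑ j, (ε j) ^ 2) := h1
      _ = norm2 x * norm2 ε := Real.sqrt_mul (by positivity) _
  have hnx2 : norm2 x ^ 2 = ∑ j, x j ^ 2 := Real.sq_sqrt (by positivity)
  have key : (∑ j, J y j * (x j + ε j)) - (∑ j, J c j * (x j + ε j))
      = w c / norm2 x * (∑ j, x j * (x j + ε j)) := by
    rw [← Finset.sum_sub_distrib, Finset.mul_sum]
    refine Finset.sum_congr rfl fun j _ => ?_
    rw [← sub_mul, halign c hc j]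
    ring
  have hsplit : (∑ j, x j * (x j + ε j)) = (∑ j, x j ^ 2) + ∑ j, x j * ε j := by
    rw [← Finset.sum_add_distrib]
    refine Finset.sum_congr rfl fun j _ => by ring
  set S := ∑ j, x j * ε j with hS
  have hCS' : -S ≤ norm2 x * norm2 ε := by
    have : ∑ j, x j * (-ε j) = -S := by
      rw [hS, ← Finset.sum_neg_distrib]
      exact Finset.sum_congr rfl fun j _ => by ring
    linarith [hCS, this.symm.le, this.ge]
  have hb := hoffset c hc
  have hkey2 : (∑ j, J y j * (x j + ε j)) - (∑ j, J c j * (x j + ε j))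
      = w c / norm2 x * (norm2 x ^ 2 + S) := by
    rw [key, hsplit, hnx2]
  have hdiv : w c / norm2 x * (norm2 x ^ 2 + S) * norm2 x
      = w c * (norm2 x ^ 2 + S) := by
    field_simp
  nlinarith [mul_pos hwc hx0, mul_nonneg hwc.le hε0, mul_pos hx0 hx0,
    mul_le_mul_of_nonneg_left hCS' hwc.le, mul_pos hwc (by linarith : (0:ℝ) < norm2 x + lam - norm2 ε)]
end

section
/- Let x, x_1,…,x_n ∈ ℝ^d, let ℓ(·, y) be differentiable, and let W₁ : ℝ → ℝ^{d₁×d}, W₂ : ℝ → ℝ^{C×d₁} be differentiable curves of parameters evolving by gradient flow with learning rate η on the loss L = (1/n)Σ_i ℓ(W₂σ(W₁x_i), y_i), i.e., ∂_t W₂ = −η∇_{W₂}L and ∂_t W₁ = −η∇_{W₁}L. Suppose that on an open time interval the activation patterns Q_x = diag(σ′(W₁(t)x)) and Q_{x_i} = diag(σ′(W₁(t)x_i)) are constant in t, with every entry of W₁(t)x and W₁(t)x_i nonzero. Define μ_{φ(x)}(t) = (W₂(t) Q_x W₁(t))ᵀ 𝟏 and m_{x_i}(t) = −∇_z ℓ(z,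 y_i)|_{z = W₂(t)σ(W₁(t)x_i)}. Then on that interval, ∂_t ⟨x, μ_{φ(x)}⟩ = (η/n) Σ_{i=1}^n m_{x_i}ᵀ [ ⟨x, x_i⟩ W₂ Q_{x_i} Q_x W₂ᵀ + (σ(W₁x)ᵀσ(W₁x_i)) I_C ] 𝟏. -/
open Matrix

section Helpers

noncomputable def rowDotCLM {C d₁ : ℕ} (s : Fin d₁ → ℝ) :
    (Fin C → Fin d₁ → ℝ) →L[ℝ] (Fin C → ℝ) :=
  LinearMap.toContinuousLinearMap
  { toFun := fun M a => ∑ h, M a h * s h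
    map_add' := by intro M N; funext a; simp [add_mul, Finset.sum_add_distrib]
    map_smul' := by intro c M; funext a; simp [Finset.mul_sum, mul_assoc] }

@[simp] lemma rowDotCLM_apply {C d₁ : ℕ} (s : Fin d₁ → ℝ) (M : Fin C → Fin d₁ → ℝ) :
    rowDotCLM s M = fun a => ∑ h, M a h * s h := rfl

noncomputable def preactCLM {C d₁ d : ℕ} (W : Matrix (Fin C) (Fin d₁) ℝ) (q : Fin d₁ → ℝ)
    (xi : Fin d → ℝ) : (Fin d₁ → Fin d → ℝ) →L[ℝ] (Fin C → ℝ) :=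
  LinearMap.toContinuousLinearMap
  { toFun := fun M a => ∑ h, W a h * (q h * ∑ j, M h j * xi j)
    map_add' := by
      intro M N; funext a
      simp [add_mul, mul_add, Finset.sum_add_distrib]
    map_smul' := by
      intro c M; funext a
      simp [Finset.mul_sum, mul_assoc, mul_left_comm] }

@[simp] lemma preactCLM_apply {C d₁ d : ℕ} (W : Matrix (Fin C) (Fin d₁) ℝ) (q : Fin d₁ → ℝ)
    (xi : Fin d → ℝ) (M : Fin d₁ → Fin d → ℝ) :
    preactCLM W q xi M = fun a => ∑ h, W a h * (q h * ∑ j, M h j * xi j) := rfl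

lemma helper1 {α β γ : Type*} [Fintype α] [Fintype β] [Fintype γ]
    (u : γ → ℝ) (G : α → β → ℝ) (W : β → γ → ℝ) :
    ∑ j, u j * ∑ a, ∑ h, G a h * W h j = ∑ a, ∑ h, G a h * ∑ j, W h j * u j := by
  simp only [Finset.mul_sum]
  rw [Finset.sum_comm]
  refine Finset.sum_congr rfl fun a _ => ?_
  rw [Finset.sum_comm]
  refine Finset.sum_congr rfl fun h _ => ?_
  refine Finset.sum_congr rfl fun j _ => by ring

lemma sum_swap2 {α β γ : Type*} [Fintype α] [Fintype β] [Fintype γ]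
    (f : α → β → γ → ℝ) :
    ∑ a, ∑ b, ∑ c, f a b c = ∑ a, ∑ c, ∑ b, f a b c :=
  Finset.sum_congr rfl fun _ _ => Finset.sum_comm

lemma sum_swap3 {α β γ δ : Type*} [Fintype α] [Fintype β] [Fintype γ] [Fintype δ]
    (f : α → β → γ → δ → ℝ) :
    ∑ a, ∑ b, ∑ c, ∑ e, f a b c e = ∑ a, ∑ b, ∑ e, ∑ c, f a b c e :=
  Finset.sum_congr rfl fun _ _ => Finset.sum_congr rfl fun _ _ => Finset.sum_comm

lemma sum_swap4 {α β γ δ ε : Type*} [Fintype α] [Fintype β] [Fintype γ] [Fintype δ] [Fintype ε]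
    (f : α → β → γ → δ → ε → ℝ) :
    ∑ a, ∑ b, ∑ c, ∑ e, ∑ g, f a b c e g = ∑ a, ∑ b, ∑ c, ∑ g, ∑ e, f a b c e g :=
  Finset.sum_congr rfl fun _ _ => Finset.sum_congr rfl fun _ _ =>
    Finset.sum_congr rfl fun _ _ => Finset.sum_comm

end Helpers

/-- under gradient flow with learning rate `η` on the loss
`L = (1/n)Σ_i ℓ(W₂σ(W₁x_i), y_i)`, on an open time interval where the activation patterns
`Q_x` and `Q_{x_i}` are constant (and the pre-activations are nonzero), the centroid inner
product `⟨x, μ_{φ(x)}⟩` with `μ_{φ(x)} = (W₂ Q_x W₁)ᵀ 𝟏` evolves as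
`∂_t ⟨x, μ_{φ(x)}⟩ = (η/n) Σ_i m_{x_i}ᵀ [ ⟨x, x_i⟩ W₂ Q_{x_i} Q_x W₂ᵀ
 + (σ(W₁x)ᵀσ(W₁x_i)) I_C ] 𝟏`.
Gradient flow is expressed entrywise: each entry of `W₂` (resp. `W₁`) has time derivative
`−η` times the corresponding entry of the gradient of `L`, the latter characterized via the
Fréchet derivative `D` evaluated on coordinate directions. -/
theorem stmt12 {d d₁ C n : ℕ} {Y : Type*} (hn : 0 < n) (η : ℝ)
    (x : Fin d → ℝ) (xs : Fin n → Fin d → ℝ) (y : Fin n → Y)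
    (ℓ : (Fin C → ℝ) → Y → ℝ)
    (W₁ : ℝ → Matrix (Fin d₁) (Fin d) ℝ) (W₂ : ℝ → Matrix (Fin C) (Fin d₁) ℝ)
    (I : Set ℝ) (hI : IsOpen I)
    (Qx : Matrix (Fin d₁) (Fin d₁) ℝ) (Q : Fin n → Matrix (Fin d₁) (Fin d₁) ℝ)
    (hQx : ∀ t ∈ I, Qx = Matrix.diagonal (fun h => if 0 < (W₁ t).mulVec x h then (1 : ℝ) else 0))
    (hQ : ∀ t ∈ I, ∀ i,
      Q i = Matrix.diagonal (fun h => if 0 < (W₁ t).mulVec (xs i) h then (1 : ℝ) else 0))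
    (hnzx : ∀ t ∈ I, ∀ h, (W₁ t).mulVec x h ≠ 0)
    (hnzs : ∀ t ∈ I, ∀ i h, (W₁ t).mulVec (xs i) h ≠ 0)
    (m : Fin n → ℝ → Fin C → ℝ)
    (hm : ∀ i, ∀ t ∈ I, ∃ D : (Fin C → ℝ) →L[ℝ] ℝ,
      HasFDerivAt (fun z => ℓ z (y i)) D
        ((W₂ t).mulVec (fun h => max ((W₁ t).mulVec (xs i) h) 0)) ∧
      ∀ v, D v = -∑ a, m i t a * v a)
    (hflow2 : ∀ t ∈ I, ∃ D : (Fin C → Fin d₁ → ℝ) →L[ℝ] ℝ,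
      HasFDerivAt (fun M : Fin C → Fin d₁ → ℝ =>
          (1 / (n : ℝ)) * ∑ i,
            ℓ ((Matrix.of M).mulVec (fun h => max ((W₁ t).mulVec (xs i) h) 0)) (y i))
        D (fun a h => W₂ t a h) ∧
      ∀ a h, HasDerivAt (fun s => W₂ s a h)
        (-η * D (fun a' h' => if a' = a ∧ h' = h then (1 : ℝ) else 0)) t)
    (hflow1 : ∀ t ∈ I, ∃ D : (Fin d₁ → Fin d → ℝ) →L[ℝ] ℝ,
      HasFDerivAt (fun M : Fin d₁ → Fin d → ℝ =>
          (1 / (n : ℝ)) * ∑ i,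
            ℓ ((W₂ t).mulVec (fun h => max ((Matrix.of M).mulVec (xs i) h) 0)) (y i))
        D (fun h j => W₁ t h j) ∧
      ∀ h j, HasDerivAt (fun s => W₁ s h j)
        (-η * D (fun h' j' => if h' = h ∧ j' = j then (1 : ℝ) else 0)) t) :
    ∀ t ∈ I, HasDerivAt
      (fun s => ∑ j, x j * ((W₂ s * Qx * W₁ s)ᵀ.mulVec (fun _ => (1 : ℝ))) j)
      ((η / (n : ℝ)) * ∑ i, ∑ a, m i t a *
        ((((∑ j, x j * xs i j) • (W₂ t * Q i * Qx * (W₂ t)ᵀ)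
          + (∑ h, max ((W₁ t).mulVec x h) 0 * max ((W₁ t).mulVec (xs i) h) 0)
              • (1 : Matrix (Fin C) (Fin C) ℝ)).mulVec (fun _ => (1 : ℝ))) a)) t := by
  intro t ht
  obtain ⟨D₂, hD₂, hW₂'⟩ := hflow2 t ht
  obtain ⟨D₁, hD₁, hW₁'⟩ := hflow1 t ht
  choose Dℓ hDℓ hDℓval using fun i => hm i t ht
  -- identify D₂
  have hD₂sum : HasFDerivAt (fun M : Fin C → Fin d₁ → ℝ =>
      (1 / (n : ℝ)) * ∑ i, ℓ ((Matrix.of M).mulVec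
        (fun h => max ((W₁ t).mulVec (xs i) h) 0)) (y i))
      ((1 / (n : ℝ)) • ∑ i, (Dℓ i).comp
        (rowDotCLM (fun h => max ((W₁ t).mulVec (xs i) h) 0)))
      (fun a h => W₂ t a h) := by
    refine HasFDerivAt.const_mul ?_ _
    refine HasFDerivAt.fun_sum fun i _ => ?_
    have hl := (rowDotCLM (C := C) (fun h => max ((W₁ t).mulVec (xs i) h) 0)).hasFDerivAt
        (x := fun a h => W₂ t a h)
    exact HasFDerivAt.comp (fun a h => W₂ t a h) (hDℓ i) hl
  have hD2eq : D₂ = (1 / (n : ℝ)) • ∑ i, (Dℓ i).comp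
      (rowDotCLM (fun h => max ((W₁ t).mulVec (xs i) h) 0)) := hD₂.unique hD₂sum
  have hw2' : ∀ a h, (-η * D₂ (fun a' h' => if a' = a ∧ h' = h then (1:ℝ) else 0))
      = η / n * ∑ i, m i t a * max ((W₁ t).mulVec (xs i) h) 0 := by
    intro a h
    rw [hD2eq]
    have key : ∀ i, (Dℓ i).comp (rowDotCLM (fun h => max ((W₁ t).mulVec (xs i) h) 0))
        (fun a' h' => if a' = a ∧ h' = h then (1:ℝ) else 0)
        = -(m i t a * max ((W₁ t).mulVec (xs i) h) 0) := by
      intro i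
      rw [ContinuousLinearMap.comp_apply, hDℓval]
      have h1 : ∀ b, (rowDotCLM (C := C) (fun h => max ((W₁ t).mulVec (xs i) h) 0)
          (fun a' h' => if a' = a ∧ h' = h then (1:ℝ) else 0)) b
          = if b = a then max ((W₁ t).mulVec (xs i) h) 0 else 0 := by
        intro b
        show (∑ h', (if b = a ∧ h' = h then (1:ℝ) else 0)
            * max ((W₁ t).mulVec (xs i) h') 0) = _
        simp [ite_and, ite_mul]
      simp [h1]
    rw [ContinuousLinearMap.smul_apply, ContinuousLinearMap.sum_apply]
    simp only [key]
    rw [Finset.sum_neg_distrib, smul_eq_mul]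
    ring
  -- identify D₁
  have hD₁sum : HasFDerivAt (fun M : Fin d₁ → Fin d → ℝ =>
      (1 / (n : ℝ)) * ∑ i, ℓ ((W₂ t).mulVec
        (fun h => max ((Matrix.of M).mulVec (xs i) h) 0)) (y i))
      ((1 / (n : ℝ)) • ∑ i, (Dℓ i).comp
        (preactCLM (W₂ t) (fun h => if 0 < (W₁ t).mulVec (xs i) h then (1:ℝ) else 0) (xs i)))
      (fun h j => W₁ t h j) := by
    refine HasFDerivAt.const_mul ?_ _
    refine HasFDerivAt.fun_sum fun i _ => ?_
    set q : Fin d₁ → ℝ := fun h => if 0 < (W₁ t).mulVec (xs i) h then (1:ℝ) else 0 with hq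
    have hpt : (preactCLM (W₂ t) q (xs i)) (fun h j => W₁ t h j)
        = (W₂ t).mulVec (fun h => max ((W₁ t).mulVec (xs i) h) 0) := by
      funext a
      show ∑ h, W₂ t a h * (q h * ∑ j, W₁ t h j * xs i j) = _
      refine Finset.sum_congr rfl fun h _ => ?_
      have : (∑ j, W₁ t h j * xs i j) = (W₁ t).mulVec (xs i) h := rfl
      rw [this]
      rcases (hnzs t ht i h).lt_or_gt with hlt | hgt
      · rw [hq]; simp only [if_neg (not_lt.mpr hlt.le)]
        rw [zero_mul, max_eq_right hlt.le]
      · rw [hq]; simp only [if_pos hgt]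
        rw [one_mul, max_eq_left hgt.le]
    have hlin : HasFDerivAt
        (fun M : Fin d₁ → Fin d → ℝ => ℓ (preactCLM (W₂ t) q (xs i) M) (y i))
        ((Dℓ i).comp (preactCLM (W₂ t) q (xs i))) (fun h j => W₁ t h j) := by
      have h0 := (preactCLM (W₂ t) q (xs i)).hasFDerivAt (x := fun h j => W₁ t h j)
      have h1 := hDℓ i
      rw [← hpt] at h1
      exact h1.comp _ h0
    refine hlin.congr_of_eventuallyEq ?_
    have hall : ∀ᶠ M : Fin d₁ → Fin d → ℝ in nhds (fun h j => W₁ t h j),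
        ∀ h, max ((Matrix.of M).mulVec (xs i) h) 0 = q h * (Matrix.of M).mulVec (xs i) h := by
      rw [Filter.eventually_all]
      intro h
      have hc : Continuous (fun M : Fin d₁ → Fin d → ℝ => (Matrix.of M).mulVec (xs i) h) := by
        show Continuous fun M : Fin d₁ → Fin d → ℝ => ∑ j, M h j * xs i j
        exact continuous_finset_sum _ fun j _ =>
          ((continuous_apply j).comp (continuous_apply h)).fun_mul continuous_const
      have hval : (Matrix.of fun h j => W₁ t h j).mulVec (xs i) h
          = (W₁ t).mulVec (xs i) h := rfl
      rcases (hnzs t ht i h).lt_or_gt with hlt | hgt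
      · have hev : ∀ᶠ M : Fin d₁ → Fin d → ℝ in nhds (fun h j => W₁ t h j),
            (Matrix.of M).mulVec (xs i) h < 0 := by
          have hcc := hc.tendsto (fun h j => W₁ t h j)
          rw [hval] at hcc
          exact hcc.eventually (eventually_lt_nhds hlt)
        filter_upwards [hev] with M hM
        rw [max_eq_right hM.le, hq]
        simp [if_neg (not_lt.mpr hlt.le)]
      · have hev : ∀ᶠ M : Fin d₁ → Fin d → ℝ in nhds (fun h j => W₁ t h j),
            0 < (Matrix.of M).mulVec (xs i) h := by
          have hcc := hc.tendsto (fun h j => W₁ t h j)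
          rw [hval] at hcc
          exact hcc.eventually (eventually_gt_nhds hgt)
        filter_upwards [hev] with M hM
        rw [max_eq_left hM.le, hq]
        simp [if_pos hgt]
    filter_upwards [hall] with M hM
    congr 1
    funext a
    show (∑ h, W₂ t a h * max ((Matrix.of M).mulVec (xs i) h) 0)
        = ∑ h, W₂ t a h * (q h * ∑ j, M h j * xs i j)
    refine Finset.sum_congr rfl fun h _ => ?_
    rw [hM h]
    rfl
  have hD1eq : D₁ = (1 / (n : ℝ)) • ∑ i, (Dℓ i).comp
      (preactCLM (W₂ t) (fun h => if 0 < (W₁ t).mulVec (xs i) h then (1:ℝ) else 0) (xs i)) :=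
    hD₁.unique hD₁sum
  have hw1' : ∀ h j, (-η * D₁ (fun h' j' => if h' = h ∧ j' = j then (1:ℝ) else 0))
      = η / n * ∑ i, ∑ b, m i t b * (W₂ t b h *
        ((if 0 < (W₁ t).mulVec (xs i) h then (1:ℝ) else 0) * xs i j)) := by
    intro h j
    rw [hD1eq]
    have key : ∀ i, (Dℓ i).comp (preactCLM (W₂ t)
        (fun h => if 0 < (W₁ t).mulVec (xs i) h then (1:ℝ) else 0) (xs i))
        (fun h' j' => if h' = h ∧ j' = j then (1:ℝ) else 0)
        = -∑ b, m i t b * (W₂ t b h *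
          ((if 0 < (W₁ t).mulVec (xs i) h then (1:ℝ) else 0) * xs i j)) := by
      intro i
      rw [ContinuousLinearMap.comp_apply, hDℓval]
      have h1 : ∀ a, (preactCLM (W₂ t)
          (fun h => if 0 < (W₁ t).mulVec (xs i) h then (1:ℝ) else 0) (xs i)
          (fun h' j' => if h' = h ∧ j' = j then (1:ℝ) else 0)) a
          = W₂ t a h * ((if 0 < (W₁ t).mulVec (xs i) h then (1:ℝ) else 0) * xs i j) := by
        intro a
        show (∑ h', W₂ t a h' * ((if 0 < (W₁ t).mulVec (xs i) h' then (1:ℝ) else 0)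
            * ∑ j', (if h' = h ∧ j' = j then (1:ℝ) else 0) * xs i j')) = _
        have h2 : ∀ h', (∑ j', (if h' = h ∧ j' = j then (1:ℝ) else 0) * xs i j')
            = if h' = h then xs i j else 0 := by
          intro h'
          simp [ite_and, ite_mul]
        simp only [h2]
        simp [mul_ite, Finset.sum_ite_eq]
      simp only [h1]
    rw [ContinuousLinearMap.smul_apply, ContinuousLinearMap.sum_apply]
    simp only [key]
    rw [Finset.sum_neg_distrib, smul_eq_mul]
    ring
  -- rewrite the function
  have hfun : (fun s => ∑ j, x j * ((W₂ s * Qx * W₁ s)ᵀ.mulVec (fun _ => (1:ℝ))) j)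
      = fun s => ∑ j, x j * ∑ a, ∑ h, (∑ h', W₂ s a h' * Qx h' h) * W₁ s h j := by
    funext s
    simp [Matrix.mulVec, dotProduct, Matrix.mul_apply, Matrix.transpose_apply]
  rw [hfun]
  have hmain : HasDerivAt
      (fun s => ∑ j, x j * ∑ a, ∑ h, (∑ h', W₂ s a h' * Qx h' h) * W₁ s h j)
      (∑ j, x j * ∑ a, ∑ h,
        ((∑ h', (-η * D₂ (fun a' h'' => if a' = a ∧ h'' = h' then (1:ℝ) else 0)) * Qx h' h)
            * W₁ t h j
          + (∑ h', W₂ t a h' * Qx h' h)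
            * (-η * D₁ (fun h'' j' => if h'' = h ∧ j' = j then (1:ℝ) else 0)))) t := by
    refine HasDerivAt.fun_sum fun j _ => ?_
    refine HasDerivAt.const_mul _ ?_
    refine HasDerivAt.fun_sum fun a _ => ?_
    refine HasDerivAt.fun_sum fun h _ => ?_
    exact (HasDerivAt.fun_sum fun h' _ => (hW₂' a h').mul_const (Qx h' h)).mul (hW₁' h j)
  refine HasDerivAt.congr_deriv hmain ?_
  -- derivative identification
  simp only [hw2', hw1']
  rw [hQx t ht]
  simp only [hQ t ht]
  have hcol : ∀ (v : Fin d₁ → ℝ) (h : Fin d₁),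
      (∑ h', v h' * (Matrix.diagonal
        (fun h => if 0 < (W₁ t).mulVec x h then (1:ℝ) else 0)) h' h)
      = v h * (if 0 < (W₁ t).mulVec x h then (1:ℝ) else 0) := by
    intro v h
    simp [Matrix.diagonal_apply, mul_ite, mul_zero]
  simp only [hcol]
  have hmv : ∀ i a,
      ((((∑ j, x j * xs i j) • (W₂ t
          * Matrix.diagonal (fun h => if 0 < (W₁ t).mulVec (xs i) h then (1:ℝ) else 0)
          * Matrix.diagonal (fun h => if 0 < (W₁ t).mulVec x h then (1:ℝ) else 0)
          * (W₂ t)ᵀ)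
        + (∑ h, max ((W₁ t).mulVec x h) 0 * max ((W₁ t).mulVec (xs i) h) 0)
            • (1 : Matrix (Fin C) (Fin C) ℝ)).mulVec (fun _ => (1:ℝ))) a)
      = (∑ j, x j * xs i j) * (∑ b, ∑ h, W₂ t a h
          * (if 0 < (W₁ t).mulVec (xs i) h then (1:ℝ) else 0)
          * (if 0 < (W₁ t).mulVec x h then (1:ℝ) else 0) * W₂ t b h)
        + ∑ h, max ((W₁ t).mulVec x h) 0 * max ((W₁ t).mulVec (xs i) h) 0 := by
    intro i a
    have hP : ∀ b, (W₂ t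
        * Matrix.diagonal (fun h => if 0 < (W₁ t).mulVec (xs i) h then (1:ℝ) else 0)
        * Matrix.diagonal (fun h => if 0 < (W₁ t).mulVec x h then (1:ℝ) else 0)
        * (W₂ t)ᵀ) a b
        = ∑ h, W₂ t a h * (if 0 < (W₁ t).mulVec (xs i) h then (1:ℝ) else 0)
          * (if 0 < (W₁ t).mulVec x h then (1:ℝ) else 0) * W₂ t b h := by
      intro b
      rw [Matrix.mul_apply]
      refine Finset.sum_congr rfl fun h _ => ?_
      rw [Matrix.mul_diagonal, Matrix.mul_diagonal, Matrix.transpose_apply]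
    show (∑ b, ((∑ j, x j * xs i j) • (W₂ t
          * Matrix.diagonal (fun h => if 0 < (W₁ t).mulVec (xs i) h then (1:ℝ) else 0)
          * Matrix.diagonal (fun h => if 0 < (W₁ t).mulVec x h then (1:ℝ) else 0)
          * (W₂ t)ᵀ)
        + (∑ h, max ((W₁ t).mulVec x h) 0 * max ((W₁ t).mulVec (xs i) h) 0)
            • (1 : Matrix (Fin C) (Fin C) ℝ)) a b * 1) = _
    simp only [Matrix.add_apply, Matrix.smul_apply, smul_eq_mul, Matrix.one_apply, mul_one]
    rw [Finset.sum_add_distrib]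
    congr 1
    · rw [Finset.mul_sum]
      exact Finset.sum_congr rfl fun b _ => by rw [hP]
    · simp [Finset.sum_ite_eq]
  simp only [hmv]
  -- final algebra
  have hqxσ : ∀ h, (if 0 < (W₁ t).mulVec x h then (1:ℝ) else 0) * (W₁ t).mulVec x h
      = max ((W₁ t).mulVec x h) 0 := by
    intro h
    rcases (hnzx t ht h).lt_or_gt with hlt | hgt
    · rw [if_neg (not_lt.mpr hlt.le), zero_mul, max_eq_right hlt.le]
    · rw [if_pos hgt, one_mul, max_eq_left hgt.le]
  have hA : (η / n) * ∑ i, ∑ a, m i t a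
        * ∑ h, max ((W₁ t).mulVec x h) 0 * max ((W₁ t).mulVec (xs i) h) 0
      = ∑ j, x j * ∑ a, ∑ h, ((η / n * ∑ i, m i t a * max ((W₁ t).mulVec (xs i) h) 0)
          * (if 0 < (W₁ t).mulVec x h then (1:ℝ) else 0)) * W₁ t h j := by
    rw [helper1 x (fun a h => (η / n * ∑ i, m i t a * max ((W₁ t).mulVec (xs i) h) 0)
        * (if 0 < (W₁ t).mulVec x h then (1:ℝ) else 0)) (fun h j => W₁ t h j)]
    have step : ∀ (a : Fin C) (h : Fin d₁),
        ((η / n * ∑ i, m i t a * max ((W₁ t).mulVec (xs i) h) 0)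
          * (if 0 < (W₁ t).mulVec x h then (1:ℝ) else 0)) * (∑ j, W₁ t h j * x j)
        = (η / n * ∑ i, m i t a * max ((W₁ t).mulVec (xs i) h) 0)
          * max ((W₁ t).mulVec x h) 0 := by
      intro a h
      rw [mul_assoc, show (∑ j, W₁ t h j * x j) = (W₁ t).mulVec x h from rfl, hqxσ]
    simp only [step]
    simp only [Finset.mul_sum, Finset.sum_mul]
    conv_rhs => rw [sum_swap2]; rw [Finset.sum_comm]
    refine Finset.sum_congr rfl fun i _ => Finset.sum_congr rfl fun a _ =>
      Finset.sum_congr rfl fun h _ => by ring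
  have hB : (η / n) * ∑ i, ∑ a, m i t a *
        ((∑ j, x j * xs i j) * (∑ b, ∑ h, W₂ t a h
          * (if 0 < (W₁ t).mulVec (xs i) h then (1:ℝ) else 0)
          * (if 0 < (W₁ t).mulVec x h then (1:ℝ) else 0) * W₂ t b h))
      = ∑ j, x j * ∑ a, ∑ h, (W₂ t a h * (if 0 < (W₁ t).mulVec x h then (1:ℝ) else 0))
          * (η / n * ∑ i, ∑ b, m i t b * (W₂ t b h
            * ((if 0 < (W₁ t).mulVec (xs i) h then (1:ℝ) else 0) * xs i j))) := by
    rw [helper1 x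
      (fun a h => W₂ t a h * (if 0 < (W₁ t).mulVec x h then (1:ℝ) else 0))
      (fun h j => η / n * ∑ i, ∑ b, m i t b * (W₂ t b h
        * ((if 0 < (W₁ t).mulVec (xs i) h then (1:ℝ) else 0) * xs i j)))]
    simp only [Finset.mul_sum, Finset.sum_mul]
    conv_rhs => rw [sum_swap3, sum_swap2, Finset.sum_comm, sum_swap4, sum_swap3, sum_swap2]
    refine Finset.sum_congr rfl fun i _ => Finset.sum_congr rfl fun b _ =>
      Finset.sum_congr rfl fun a _ => Finset.sum_congr rfl fun h _ =>
      Finset.sum_congr rfl fun j _ => by ring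
  simp only [mul_add, Finset.sum_add_distrib]
  rw [← hA, ← hB]
  exact add_comm _ _
end

section
/- Let x_1,…,x_n ∈ ℝ^d, α ∈ ℝ^n, γ ∈ ℝ, and let M ∈ ℝ^{d×d} be a symmetric matrix whose range is contained in the span of {x_1,…,x_n} (for instance M = Σ_i c_i x_i x_iᵀ). Define the kernel predictor f(x) = Σ_{i=1}^n α_i exp(−γ (x − x_i)ᵀ M (x − x_i)). Then for every j, the gradient satisfies ∇f(x_j) = M v_j for some v_j ∈ ℝ^d, hence ∇f(x_j) ∈ span{x_1,…,x_n}; consequently the updated feature matrix M′ = (1/n) Σ_{i=1}^n ∇f(x_i) (∇f(x_i))ᵀ lies in the span of the matrices {x_i x_jᵀ : 1 ≤ i, j ≤ n}, so the property of being a linear combination of outer products of training samples is preserved under one iteration of recursive feature machine training. -/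
open Matrix

private lemma stmt14_evalL {d : ℕ} (M : Matrix (Fin d) (Fin d) ℝ) (hsym : Mᵀ = M)
    (p c : Fin d → ℝ) (a : Fin d) :
    (∑ a', ∑ b, (((p a' - c a') * M a' b) • (ContinuousLinearMap.proj b : (Fin d → ℝ) →L[ℝ] ℝ)
      + (p b - c b) • (M a' b • (ContinuousLinearMap.proj a' : (Fin d → ℝ) →L[ℝ] ℝ)))) (Pi.single a 1)
      = 2 * (M.mulVec (fun b => p b - c b)) a := by
  have hMsym : ∀ a' b : Fin d, M a' b = M b a' := fun a' b =>
    (Matrix.transpose_apply M b a').symm.trans (congrFun (congrFun hsym b) a')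
  simp only [ContinuousLinearMap.coe_sum', Finset.sum_apply,
    ContinuousLinearMap.add_apply, ContinuousLinearMap.smul_apply,
    ContinuousLinearMap.proj_apply, smul_eq_mul, Pi.single_apply, mul_ite, mul_one, mul_zero,
    Finset.sum_ite_eq', Finset.mem_univ, if_true, Finset.sum_add_distrib, ite_mul, zero_mul]
  simp only [Matrix.mulVec, dotProduct]
  rw [two_mul]
  congr 1
  · refine Finset.sum_congr rfl fun a' _ => ?_
    rw [hMsym a' a]; ring
  · have h : ∀ x' : Fin d, (∑ x1, if x' = a then (p x1 - c x1) * M x' x1 else 0)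
        = if x' = a then ∑ x1, (p x1 - c x1) * M x' x1 else 0 := fun x' => by
      split <;> simp
    rw [Finset.sum_congr rfl fun x' _ => h x', Finset.sum_ite_eq' Finset.univ a]
    simp only [Finset.mem_univ, if_true]
    refine Finset.sum_congr rfl fun b _ => ?_; ring

private lemma stmt14_grad {d n : ℕ} (x : Fin n → Fin d → ℝ) (αv : Fin n → ℝ) (γ : ℝ)
    (M : Matrix (Fin d) (Fin d) ℝ) (hsym : Mᵀ = M) (p : Fin d → ℝ)
    (D : (Fin d → ℝ) →L[ℝ] ℝ)
    (hD : HasFDerivAt (fun z => ∑ i, αv i *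
      Real.exp (-γ * (∑ a, ∑ b, (z a - x i a) * M a b * (z b - x i b)))) D p)
    (g : Fin d → ℝ) (hDv : ∀ v, D v = ∑ a, g a * v a) :
    ∃ v : Fin d → ℝ, g = M.mulVec v := by
  classical
  set L : Fin n → (Fin d → ℝ) →L[ℝ] ℝ := fun i =>
    ∑ a, ∑ b, (((p a - x i a) * M a b) • (ContinuousLinearMap.proj b : (Fin d → ℝ) →L[ℝ] ℝ)
      + (p b - x i b) • (M a b • (ContinuousLinearMap.proj a : (Fin d → ℝ) →L[ℝ] ℝ))) with hL
  set E : Fin n → ℝ := fun i =>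
    Real.exp (-γ * (∑ a, ∑ b, (p a - x i a) * M a b * (p b - x i b))) with hE
  have hq : ∀ i : Fin n, HasFDerivAt
      (fun z : Fin d → ℝ => ∑ a, ∑ b, (z a - x i a) * M a b * (z b - x i b)) (L i) p := by
    intro i
    rw [hL]
    apply HasFDerivAt.fun_sum; intro a _
    apply HasFDerivAt.fun_sum; intro b _
    have h1 : HasFDerivAt (fun z : Fin d → ℝ => (z a - x i a) * M a b)
        (M a b • (ContinuousLinearMap.proj a : (Fin d → ℝ) →L[ℝ] ℝ)) p := by
      have := ((ContinuousLinearMap.proj a : (Fin d → ℝ) →L[ℝ] ℝ).hasFDerivAt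
        (x := p)).sub_const (x i a)
      simpa using this.mul_const (M a b)
    have h2 : HasFDerivAt (fun z : Fin d → ℝ => z b - x i b)
        (ContinuousLinearMap.proj b : (Fin d → ℝ) →L[ℝ] ℝ) p := by
      simpa using ((ContinuousLinearMap.proj b : (Fin d → ℝ) →L[ℝ] ℝ).hasFDerivAt
        (x := p)).sub_const (x i b)
    simpa using h1.fun_mul h2
  have hf' : HasFDerivAt (fun z => ∑ i, αv i *
      Real.exp (-γ * (∑ a, ∑ b, (z a - x i a) * M a b * (z b - x i b))))
      (∑ i, ((-γ) * (αv i * E i)) • L i) p := by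
    apply HasFDerivAt.fun_sum
    intro i _
    have h3 : HasFDerivAt (fun z : Fin d → ℝ =>
        -γ * (∑ a, ∑ b, (z a - x i a) * M a b * (z b - x i b))) ((-γ) • L i) p :=
      (hq i).const_mul (-γ)
    have h5 := h3.exp.const_mul (αv i)
    have hco : (αv i) • (Real.exp (-γ * (∑ a, ∑ b, (p a - x i a) * M a b * (p b - x i b))) •
        ((-γ) • L i)) = ((-γ) * (αv i * E i)) • L i := by
      rw [hE, smul_smul, smul_smul]; congr 1; ring
    rw [← hco]
    exact h5
  have hDeq : D = ∑ i, ((-γ) * (αv i * E i)) • L i := hD.unique hf'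
  refine ⟨∑ i, ((-γ) * (αv i * E i) * 2) • (fun b => p b - x i b), ?_⟩
  have hw : M.mulVec (∑ i, ((-γ) * (αv i * E i) * 2) • (fun b => p b - x i b))
      = ∑ i, ((-γ) * (αv i * E i) * 2) • M.mulVec (fun b => p b - x i b) := by
    simp only [← Matrix.mulVecLin_apply, map_sum, _root_.map_smul]
  funext a
  have h6 : g a = D (Pi.single a 1) := by
    rw [hDv]
    simp [Pi.single_apply, mul_ite, Finset.sum_ite_eq']
  rw [h6, hDeq, hw]
  simp only [ContinuousLinearMap.coe_sum', Finset.sum_apply,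
    ContinuousLinearMap.smul_apply, smul_eq_mul, Pi.smul_apply]
  refine Finset.sum_congr rfl fun i _ => ?_
  rw [hL]
  have := stmt14_evalL M hsym p (x i) a
  rw [this]  -- L i (single a 1) = 2 * (M.mulVec ...) a
  ring

/-- for a symmetric feature matrix `M` whose range lies in the span of the
training points, the gradients of the kernel predictor
`f(x) = Σ_i α_i exp(−γ (x − x_i)ᵀ M (x − x_i))` at the training points satisfy
`∇f(x_j) = M v_j` for some `v_j`, hence lie in `span{x_1,…,x_n}`; consequently the updated
feature matrix `M′ = (1/n) Σ_i ∇f(x_i)(∇f(x_i))ᵀ` lies in the span of the outer products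
`{x_i x_jᵀ}`.  The gradient `g j` of `f` at `x_j` is characterized via the Fréchet
derivative. -/
theorem stmt14 {d n : ℕ} (x : Fin n → Fin d → ℝ) (αv : Fin n → ℝ) (γ : ℝ)
    (M : Matrix (Fin d) (Fin d) ℝ) (hsym : Mᵀ = M)
    (hrange : ∀ v : Fin d → ℝ, M.mulVec v ∈ Submodule.span ℝ (Set.range x))
    (f : (Fin d → ℝ) → ℝ)
    (hf : f = fun z => ∑ i, αv i *
      Real.exp (-γ * (∑ a, ∑ b, (z a - x i a) * M a b * (z b - x i b))))
    (g : Fin n → Fin d → ℝ)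
    (hg : ∀ j, ∃ D : (Fin d → ℝ) →L[ℝ] ℝ,
      HasFDerivAt f D (x j) ∧ ∀ v, D v = ∑ a, g j a * v a) :
    (∀ j, ∃ v : Fin d → ℝ, g j = M.mulVec v) ∧
    (∀ j, g j ∈ Submodule.span ℝ (Set.range x)) ∧
    (1 / (n : ℝ)) • (∑ i, Matrix.vecMulVec (g i) (g i))
      ∈ Submodule.span ℝ
          {A : Matrix (Fin d) (Fin d) ℝ | ∃ i j, A = Matrix.vecMulVec (x i) (x j)} := by

  subst hf
  have key : ∀ j, ∃ v : Fin d → ℝ, g j = M.mulVec v := by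
    intro j
    obtain ⟨D, hD, hDv⟩ := hg j
    exact stmt14_grad x αv γ M hsym (x j) D hD (g j) hDv
  have hgspan : ∀ j, g j ∈ Submodule.span ℝ (Set.range x) := by
    intro j; obtain ⟨v, hv⟩ := key j; rw [hv]; exact hrange v
  refine ⟨key, hgspan, ?_⟩
  set T := Submodule.span ℝ
    {A : Matrix (Fin d) (Fin d) ℝ | ∃ i j, A = Matrix.vecMulVec (x i) (x j)} with hT
  have hbil : ∀ u v : Fin d → ℝ, u ∈ Submodule.span ℝ (Set.range x) →
      v ∈ Submodule.span ℝ (Set.range x) → Matrix.vecMulVec u v ∈ T := by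
    intro u v hu hv
    induction hu using Submodule.span_induction with
    | mem u hu =>
      induction hv using Submodule.span_induction with
      | mem v hv =>
        obtain ⟨i, rfl⟩ := hu; obtain ⟨j, rfl⟩ := hv
        exact Submodule.subset_span ⟨i, j, rfl⟩
      | zero =>
        have : Matrix.vecMulVec u (0 : Fin d → ℝ) = 0 := by
          ext a b; simp [Matrix.vecMulVec]
        rw [this]; exact T.zero_mem
      | add v w _ _ hv hw =>
        have : Matrix.vecMulVec u (v + w) = Matrix.vecMulVec u v + Matrix.vecMulVec u w := by
          ext a b; simp [Matrix.vecMulVec, mul_add]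
        rw [this]; exact T.add_mem hv hw
      | smul c v _ hv =>
        have : Matrix.vecMulVec u (c • v) = c • Matrix.vecMulVec u v := by
          ext a b; simp [Matrix.vecMulVec]; ring
        rw [this]; exact T.smul_mem c hv
    | zero =>
      have : Matrix.vecMulVec (0 : Fin d → ℝ) v = 0 := by
        ext a b; simp [Matrix.vecMulVec]
      rw [this]; exact T.zero_mem
    | add u w hu' hw' hu hw =>
      have : Matrix.vecMulVec (u + w) v = Matrix.vecMulVec u v + Matrix.vecMulVec w v := by
        ext a b; simp [Matrix.vecMulVec, add_mul]
      rw [this]; exact T.add_mem hu hw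
    | smul c u hu' hu =>
      have : Matrix.vecMulVec (c • u) v = c • Matrix.vecMulVec u v := by
        ext a b; simp [Matrix.vecMulVec]; ring
      rw [this]; exact T.smul_mem c hu
  exact T.smul_mem _ (Submodule.sum_mem _ fun i _ => hbil _ _ (hgspan i) (hgspan i))
end

section
/- Let x_1,…,x_n ∈ ℝ^d be unit-norm vectors and for each i set m_i = max_{j ≠ i} ⟨x_i, x_j⟩, assuming m_i < 1. Define a one-hidden-layer ReLU network σ(W₁x + b) with W₁ ∈ ℝ^{n×d} having i-th row x_i and bias b_i = −(1 + m_i)/2. Then for every pair (i, j): σ(⟨x_i, x_j⟩ + b_i) = 0 if i ≠ j, and σ(⟨x_j, x_j⟩ + b_j) = (1 − m_j)/2 > 0; i.e., on input x_j only the j-th hidden neuron is active, and its activation hyperplane {z : ⟨x_j, z⟩ + b_j = 0} has normal vector x_j, so any network f(x) = W₂σ(W₁x + b) built on this hidden layer is normal-aligned to the data. -/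
/-- for unit-norm data `x_1,…,x_n` with pairwise maximal correlations
`m_i = max_{j ≠ i} ⟨x_i, x_j⟩ < 1`, the one-hidden-layer ReLU network whose first-layer
weight rows are the `x_i` and whose biases are `b_i = −(1 + m_i)/2` satisfies: on input
`x_j`, neuron `i ≠ j` is inactive, `σ(⟨x_i, x_j⟩ + b_i) = 0`, while neuron `j` is active
with value `σ(⟨x_j, x_j⟩ + b_j) = (1 − m_j)/2 > 0`; i.e. only the `j`-th hidden neuron is
active on input `x_j`, so the construction yields a normal-aligned deep network. -/
theorem stmt19 {d n : ℕ} (x : Fin n → Fin d → ℝ)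
    (hunit : ∀ i, ∑ k, (x i k) ^ 2 = 1)
    (m : Fin n → ℝ)
    (hm : ∀ i, (∀ j, j ≠ i → ∑ k, x i k * x j k ≤ m i) ∧
      ∃ j, j ≠ i ∧ ∑ k, x i k * x j k = m i)
    (hm1 : ∀ i, m i < 1)
    (b : Fin n → ℝ) (hb : ∀ i, b i = -(1 + m i) / 2) :
    (∀ i j, i ≠ j → max ((∑ k, x i k * x j k) + b i) 0 = 0) ∧
    (∀ j, max ((∑ k, x j k * x j k) + b j) 0 = (1 - m j) / 2 ∧ 0 < (1 - m j) / 2) := by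
  constructor
  · intro i j hij
    have h1 : ∑ k, x i k * x j k ≤ m i := (hm i).1 j (Ne.symm hij)
    have : (∑ k, x i k * x j k) + b i ≤ 0 := by
      rw [hb i]; nlinarith [hm1 i]
    exact max_eq_right this
  · intro j
    have h1 : ∑ k, x j k * x j k = 1 := by
      rw [← hunit j]; exact Finset.sum_congr rfl (fun k _ => (sq (x j k)).symm)
    have hpos : 0 < (1 - m j) / 2 := by nlinarith [hm1 j]
    refine ⟨?_, hpos⟩
    rw [h1, hb j]
    have : 1 + -(1 + m j) / 2 = (1 - m j) / 2 := by ring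
    rw [this]
    exact max_eq_left hpos.le
end
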